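/- For the disjoint union G_mstar of q copies of the m-vertex star graph (n = qm vertices, q ≥ m ≥ 2), every bitstring h that is a Z_2-linear combination of the basis bitstrings supported on the star centers and has Hamming weight at least m lies in C(G_mstar, n, m); in particular C(G_mstar, n, m) ≠ ∅. -/

import Mathlib

open Finset

/-- Hamming weight of a bitstring. -/
def wt {ι : Type*} [Fintype ι] (k : ι → ZMod 2) : ℕ :=
  (univ.filter fun i => k i ≠ 0).card

/-- Hamming weight of the bitwise OR of two bitstrings. -/
def wtOr {ι : Type*} [Fintype ι] (k l : ι → ZMod 2) : ℕ :=
  (univ.filter fun i => k i ≠ 0 ∨ l i ≠ 0).card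

/-- `Z(G,n,d) = {k : wt(k ∨ (A·k)) ≤ d - 1}`. -/
def Zset {ι : Type*} [Fintype ι] (A : Matrix ι ι (ZMod 2)) (d : ℕ) :
    Set (ι → ZMod 2) :=
  {k | wtOr k (A.mulVec k) ≤ d - 1}

/-- `Z^⊥(G,n,d) = {h : h·k = 0 for all k ∈ Z(G,n,d)}`. -/
def Zperp {ι : Type*} [Fintype ι] (A : Matrix ι ι (ZMod 2)) (d : ℕ) :
    Set (ι → ZMod 2) :=
  {h | ∀ k ∈ Zset A d, ∑ i, h i * k i = 0}

/-- `W(G,n,d) = {A·m + l : wt(m ∨ l) ≤ d - 1}`. -/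
def Wset {ι : Type*} [Fintype ι] (A : Matrix ι ι (ZMod 2)) (d : ℕ) :
    Set (ι → ZMod 2) :=
  {h | ∃ m l, wtOr m l ≤ d - 1 ∧ A.mulVec m + l = h}

/-- `C(G,n,d) = Z^⊥(G,n,d) \ W(G,n,d)`. -/
def Cset {ι : Type*} [Fintype ι] (A : Matrix ι ι (ZMod 2)) (d : ℕ) :
    Set (ι → ZMod 2) :=
  Zperp A d \ Wset A d

/-- Block-diagonal adjacency matrix of `q` disjoint copies of the star graph on
`m + 2` vertices: vertex `(i, j)` is vertex `j` of copy `i`, with `j = 0` the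
center of each star. -/
def Amstar (q m : ℕ) :
    Matrix (Fin q × Fin (m + 2)) (Fin q × Fin (m + 2)) (ZMod 2) :=
  fun p q' => if p.1 = q'.1 ∧ ((p.2 = 0 ∧ q'.2 ≠ 0) ∨ (q'.2 = 0 ∧ p.2 ≠ 0)) then 1 else 0

open Matrix

/-!
A bitstring `k` with `wt(k ∨ A k) < m + 2` vanishes on every center: if `k (i, 0) ≠ 0`, then
`A k` equals `k (i, 0)` on all leaves of star `i`, so the whole block of `m + 2` vertices lies in
the support of `k ∨ A k`. Hence every bitstring supported on the centers is orthogonal to `Z`.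
Conversely, if `h = A m' + l` with `h` supported on the centers, every center in the support of
`h` has a vertex of its own star in the support of `m' ∨ l` (either `l` at the center, or `m'` at
a leaf, since `A m'` at a center sums `m'` over the leaves). Thus `wt(m' ∨ l) ≥ wt h ≥ m + 2`, and
`h ∉ W`.
-/

namespace Amstar

variable {q m : ℕ}

theorem mulVec_leaf (k : Fin q × Fin (m + 2) → ZMod 2) (i : Fin q) {j : Fin (m + 2)}
    (hj : j ≠ 0) : (Amstar q m *ᵥ k) (i, j) = k (i, 0) := by
  simp only [Matrix.mulVec, dotProduct, Amstar, ite_mul, one_mul, zero_mul]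
  rw [Finset.sum_eq_single (i, 0)]
  · simp [hj]
  · rintro ⟨i', j'⟩ - hne
    rw [Ne, Prod.mk.injEq] at hne
    grind
  · simp

theorem mulVec_center (k : Fin q × Fin (m + 2) → ZMod 2) (i : Fin q) :
    (Amstar q m *ᵥ k) (i, 0) = ∑ j ∈ univ.erase 0, k (i, j) := by
  simp only [Matrix.mulVec, dotProduct, Amstar, ite_mul, one_mul, zero_mul]
  rw [Fintype.sum_prod_type, Finset.sum_eq_single i]
  · simp [Finset.sum_ite, Finset.filter_ne']
  · intro i' _ hi'
    exact Finset.sum_eq_zero fun j _ => by simp [Ne.symm hi']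
  · simp

theorem apply_center_eq_zero_of_mem_Zset {k : Fin q × Fin (m + 2) → ZMod 2}
    (hk : k ∈ Zset (Amstar q m) (m + 2)) (i : Fin q) : k (i, 0) = 0 := by
  by_contra hne
  have hblock : ({i} : Finset (Fin q)) ×ˢ (univ : Finset (Fin (m + 2))) ⊆
      univ.filter fun p => k p ≠ 0 ∨ (Amstar q m *ᵥ k) p ≠ 0 := by
    rintro ⟨i', j⟩ hp
    obtain rfl : i' = i := mem_singleton.1 (mem_product.1 hp).1
    by_cases hj : j = 0
    · simp [hj, hne]
    · simp [mulVec_leaf k i' hj, hne]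
  have hcard : m + 2 ≤ m + 2 - 1 := by
    simpa using (card_le_card hblock).trans hk
  omega

theorem mem_Zperp_of_support_centers {h : Fin q × Fin (m + 2) → ZMod 2}
    (hsupp : ∀ p, p.2 ≠ 0 → h p = 0) : h ∈ Zperp (Amstar q m) (m + 2) := by
  intro k hk
  refine Finset.sum_eq_zero fun ⟨i, j⟩ _ => ?_
  by_cases hj : j = 0
  · subst hj
    rw [apply_center_eq_zero_of_mem_Zset hk i, mul_zero]
  · rw [hsupp (i, j) hj, zero_mul]

theorem wt_le_wtOr_of_mulVec_add_eq {h m' l : Fin q × Fin (m + 2) → ZMod 2}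
    (hsupp : ∀ p, p.2 ≠ 0 → h p = 0) (hml : Amstar q m *ᵥ m' + l = h) : wt h ≤ wtOr m' l := by
  have hsub : (univ.filter fun p => h p ≠ 0) ⊆
      (univ.filter fun p => m' p ≠ 0 ∨ l p ≠ 0).image fun p => (p.1, 0) := by
    rintro ⟨i, j⟩ hp
    simp only [mem_filter, mem_univ, true_and] at hp
    obtain rfl : j = 0 := by_contra fun hj => hp (hsupp _ hj)
    rw [← hml, Pi.add_apply, mulVec_center] at hp
    simp only [mem_image, mem_filter, mem_univ, true_and]
    by_cases hl : l (i, 0) = 0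
    · rw [hl, add_zero] at hp
      obtain ⟨j, -, hj⟩ := Finset.exists_ne_zero_of_sum_ne_zero hp
      exact ⟨(i, j), Or.inl hj, rfl⟩
    · exact ⟨(i, 0), Or.inr hl, rfl⟩
  exact (card_le_card hsub).trans card_image_le

theorem notMem_Wset_of_support_centers {h : Fin q × Fin (m + 2) → ZMod 2}
    (hsupp : ∀ p, p.2 ≠ 0 → h p = 0) (hwt : m + 2 ≤ wt h) : h ∉ Wset (Amstar q m) (m + 2) := by
  rintro ⟨m', l, hwl, hml⟩
  have := wt_le_wtOr_of_mulVec_add_eq hsupp hml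
  omega

end Amstar

theorem wt_indicator_centers (q m : ℕ) :
    wt (fun p : Fin q × Fin (m + 2) => if p.2 = 0 then (1 : ZMod 2) else 0) = q := by
  have hfilter : (univ.filter fun p : Fin q × Fin (m + 2) =>
      (if p.2 = 0 then (1 : ZMod 2) else 0) ≠ 0) = univ ×ˢ {0} := by
    ext ⟨i, j⟩
    by_cases hj : j = 0 <;> simp [hj, eq_comm]
  rw [wt, hfilter, card_product, card_univ, Fintype.card_fin, card_singleton, mul_one]

/-- For the disjoint union of `q` copies of the `(m+2)`-vertex star graph
(`n = q(m+2)` vertices, `q ≥ m + 2 ≥ 2`), every bitstring `h` supported on the star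
centers (i.e. a `ZMod 2`-linear combination of the center basis bitstrings) with
Hamming weight at least `m + 2` lies in `C(G_mstar, n, m+2)`; in particular
`C(G_mstar, n, m+2) ≠ ∅`. -/
theorem stmt9 (q m : ℕ) (hq : m + 2 ≤ q) :
    (∀ h : Fin q × Fin (m + 2) → ZMod 2,
        (∀ p, p.2 ≠ 0 → h p = 0) → m + 2 ≤ wt h → h ∈ Cset (Amstar q m) (m + 2)) ∧
    (Cset (Amstar q m) (m + 2)).Nonempty := by
  have hC : ∀ h : Fin q × Fin (m + 2) → ZMod 2,
      (∀ p, p.2 ≠ 0 → h p = 0) → m + 2 ≤ wt h → h ∈ Cset (Amstar q m) (m + 2) :=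
    fun h hsupp hwt =>
      ⟨Amstar.mem_Zperp_of_support_centers hsupp, Amstar.notMem_Wset_of_support_centers hsupp hwt⟩
  exact ⟨hC, fun p => if p.2 = 0 then 1 else 0,
    hC _ (fun p hp => if_neg hp) (by rwa [wt_indicator_centers])⟩
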